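/- Minding's degree formula (upper bound form): let f, θ ∈ k[x][y] with y-degrees m, n, let b = deg_x B_0, and let y_1,...,y_n be the roots of θ in the field of Puiseux series in 1/x over k̄, with h_i = -val(y_i) (the 'degree' of y_i). Let k_i be the order of growth deg f(x, y_i) (i.e., -val of f(x,y_i) in the Puiseux field). Then deg_x Res_y(f, θ) ≤ m·b + k_1 + ... + k_n, and m·b + Σ k_i is an integer. -/

import Mathlib

open Polynomial

/-- The Sylvester-style matrix of `f` (of degree `m` in the variable) and `g`
(of degree `n`): an `(m+n) × (m+n)` matrix whose first `m` rows carry the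
coefficients of `g` (in descending order, shifted) and whose last `n` rows carry
the coefficients of `f`.  Its determinant is the resultant, normalized so that
`resultant m n f g = (leadingCoeff g)^m * ∏ f(β)` over the roots `β` of `g`. -/
noncomputable def sylvester {R : Type*} [CommRing R] (m n : ℕ) (f g : Polynomial R) :
    Matrix (Fin (m + n)) (Fin (m + n)) R :=
  Matrix.of fun i j =>
    if (i : ℕ) < m then
      (if (i : ℕ) ≤ (j : ℕ) ∧ (j : ℕ) ≤ (i : ℕ) + n then g.coeff (n + i - j) else 0)
    else
      (if (i : ℕ) - m ≤ (j : ℕ) ∧ (j : ℕ) ≤ ((i : ℕ) - m) + m then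
        f.coeff (m + ((i : ℕ) - m) - j) else 0)

/-- The resultant of `f` and `g`, viewed as polynomials of degrees `m` and `n`
respectively (eliminating their common variable). -/
noncomputable def resultant {R : Type*} [CommRing R] (m n : ℕ) (f g : Polynomial R) : R :=
  (sylvester m n f g).det

/-! Over the algebraically closed field `K`, `θ` splits as `B₀ ∏ (y - yᵢ)`, so the resultant is
`B₀^m ∏ f(yᵢ)`. Since the valuation is additive on products and equals `-deg` on `k[x]`, this
gives `deg Res = m b + Σ kᵢ` exactly, and both the bound and the integrality are read off
this equality. -/

theorem sylvester_eq_transpose_submatrix {R : Type*} [CommRing R] (m n : ℕ) (f g : R[X]) :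
    _root_.sylvester m n f g =
      (Polynomial.sylvester g f n m).transpose.submatrix
        (Fin.revPerm.trans (finCongr (add_comm m n)))
        (Fin.revPerm.trans (finCongr (add_comm m n))) := by
  ext i j
  obtain ⟨i, hi⟩ := i
  obtain ⟨j, hj⟩ := j
  simp only [_root_.sylvester, Polynomial.sylvester, Matrix.of_apply, Matrix.submatrix_apply,
    Matrix.transpose_apply, Equiv.trans_apply, Fin.revPerm_apply, finCongr_apply]
  by_cases him : i < m
  · have hrev : Fin.cast (add_comm m n) (Fin.rev ⟨i, hi⟩) = Fin.natAdd n ⟨m - 1 - i, by omega⟩ :=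
      Fin.ext (by simp only [Fin.val_cast, Fin.val_rev, Fin.val_natAdd]; omega)
    rw [hrev, Fin.addCases_right, if_pos him]
    simp only [Fin.val_cast, Fin.val_rev, Set.mem_Icc]
    congr 1
    · apply propext; omega
    · congr 1; omega
  · have hrev :
        Fin.cast (add_comm m n) (Fin.rev ⟨i, hi⟩) = Fin.castAdd m ⟨m + n - 1 - i, by omega⟩ :=
      Fin.ext (by simp only [Fin.val_cast, Fin.val_rev, Fin.val_castAdd]; omega)
    rw [hrev, Fin.addCases_left, if_neg him]
    simp only [Fin.val_cast, Fin.val_rev, Set.mem_Icc]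
    congr 1
    · apply propext; omega
    · congr 1; omega

theorem resultant_eq_polynomial_resultant {R : Type*} [CommRing R] (m n : ℕ) (f g : R[X]) :
    _root_.resultant m n f g = Polynomial.resultant g f n m := by
  rw [_root_.resultant, sylvester_eq_transpose_submatrix, Matrix.det_submatrix_equiv_self,
    Matrix.det_transpose, Polynomial.resultant]

theorem resultant_map_eq_leadingCoeff_pow_mul_prod_eval {R K : Type*} [CommRing R] [Field K]
    (ι : R →+* K) (m : ℕ) (f θ : R[X]) (hf : f.natDegree ≤ m) (hθ : ι θ.leadingCoeff ≠ 0)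
    (hsplit : (θ.map ι).Splits) :
    ι (_root_.resultant m θ.natDegree f θ) =
      ι θ.leadingCoeff ^ m * ((θ.map ι).roots.map (f.map ι).eval).prod := by
  rw [resultant_eq_polynomial_resultant, ← Polynomial.resultant_map_map,
    ← natDegree_map_of_leadingCoeff_ne_zero ι hθ,
    resultant_eq_prod_eval _ _ _ (natDegree_map_le.trans hf) hsplit,
    leadingCoeff_map_of_leadingCoeff_ne_zero ι hθ]

theorem apply_multiset_prod_eq_sum {M : Type*} [CommMonoidWithZero M] [NoZeroDivisors M]
    [Nontrivial M] (v : M → ℚ) (hv : ∀ a b : M, a ≠ 0 → b ≠ 0 → v (a * b) = v a + v b)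
    (s : Multiset M) (hs : ∀ a ∈ s, a ≠ 0) : v s.prod = (s.map v).sum := by
  induction s using Multiset.induction_on with
  | empty => simpa using hv 1 1 one_ne_zero one_ne_zero
  | cons a s ih =>
    rw [Multiset.forall_mem_cons] at hs
    rw [Multiset.prod_cons, hv _ _ hs.1 (Multiset.prod_ne_zero fun h => hs.2 0 h rfl),
      ih hs.2, Multiset.map_cons, Multiset.sum_cons]

theorem injective_of_valuation_eq_neg_natDegree {R K : Type*} [Ring R] [Nontrivial R] [Ring K]
    (ι : R[X] →+* K) (v : K → ℚ) (hv : ∀ p : R[X], p ≠ 0 → v (ι p) = -(p.natDegree : ℚ)) :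
    Function.Injective ι := by
  refine (injective_iff_map_eq_zero ι).2 fun p hp => by_contra fun hp0 => ?_
  have hXp : ι (X * p) = ι p := by rw [map_mul, hp, mul_zero]
  have hdeg := hv _ (monic_X.mul_right_ne_zero hp0)
  rw [hXp, hv p hp0, natDegree_X_mul hp0] at hdeg
  push_cast at hdeg
  linarith

theorem stmt13_general {k K : Type*} [Field k]
    [Field K] [IsAlgClosed K]
    (ι : Polynomial k →+* K) (valq : K → ℚ)
    (hval_mul : ∀ a b : K, a ≠ 0 → b ≠ 0 → valq (a * b) = valq a + valq b)
    (hval_poly : ∀ p : Polynomial k, p ≠ 0 → valq (ι p) = -(p.natDegree : ℚ))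
    (m n : ℕ) (f θ : Polynomial (Polynomial k))
    (hfm : f.natDegree = m) (hθn : θ.natDegree = n) (hθ0 : θ ≠ 0)
    (hnz : ∀ y ∈ (θ.map ι).roots, (f.map ι).eval y ≠ 0) :
    ((resultant m n f θ).natDegree : ℚ)
        ≤ m * θ.leadingCoeff.natDegree +
          ((θ.map ι).roots.map fun y => -valq ((f.map ι).eval y)).sum ∧
      ∃ z : ℤ,
        (m * θ.leadingCoeff.natDegree : ℚ) +
            ((θ.map ι).roots.map fun y => -valq ((f.map ι).eval y)).sum = z := by
  have hι := injective_of_valuation_eq_neg_natDegree ι valq hval_poly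
  have hB₀ : θ.leadingCoeff ≠ 0 := leadingCoeff_ne_zero.2 hθ0
  have hιB₀ : ι θ.leadingCoeff ≠ 0 := (map_ne_zero_iff ι hι).2 hB₀
  have hprod := resultant_map_eq_leadingCoeff_pow_mul_prod_eval ι m f θ hfm.le hιB₀
    (IsAlgClosed.splits _)
  rw [hθn, ← Multiset.prod_replicate, ← Multiset.prod_add] at hprod
  have hfactors : ∀ a ∈ Multiset.replicate m (ι θ.leadingCoeff) +
      (θ.map ι).roots.map (f.map ι).eval, a ≠ 0 := by
    simp only [Multiset.mem_add, Multiset.mem_replicate, Multiset.mem_map]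
    rintro a (⟨-, rfl⟩ | ⟨y, hy, rfl⟩)
    exacts [hιB₀, hnz y hy]
  have hR : resultant m n f θ ≠ 0 := fun h => by
    rw [h, map_zero] at hprod
    exact Multiset.prod_ne_zero (fun h0 => hfactors 0 h0 rfl) hprod.symm
  have hdeg : ((resultant m n f θ).natDegree : ℚ) = m * θ.leadingCoeff.natDegree +
      ((θ.map ι).roots.map fun y => -valq ((f.map ι).eval y)).sum := by
    have hval := hval_poly _ hR
    rw [hprod, apply_multiset_prod_eq_sum valq hval_mul _ hfactors] at hval
    simp only [Multiset.map_add, Multiset.map_replicate, Multiset.sum_add,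
      Multiset.sum_replicate, hval_poly _ hB₀, nsmul_eq_mul, Multiset.map_map,
      Function.comp_def] at hval
    rw [Multiset.sum_map_neg]
    linarith
  exact ⟨hdeg.le, _, hdeg.symm⟩

/-- Minding's degree bound.  `K` plays the role of the field of Puiseux series in
`1/x` over `k̄` (algebraically closed, with a valuation `valq` satisfying
`valq p = -deg p` on polynomials), `ι : k̄[x] →+* K` the embedding.  With
`b = deg_x B₀`, roots `y₁,…,y_n` of `θ` in `K` and `kᵢ = -valq f(x,yᵢ)`,
`deg_x Res_y(f,θ) ≤ m·b + k₁ + ⋯ + k_n`, and `m·b + Σ kᵢ` is an integer. -/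
theorem stmt13 {k K : Type*} [Field k] [IsAlgClosed k] [CharZero k]
    [Field K] [IsAlgClosed K]
    (ι : Polynomial k →+* K) (valq : K → ℚ)
    (hval_mul : ∀ a b : K, a ≠ 0 → b ≠ 0 → valq (a * b) = valq a + valq b)
    (hval_add : ∀ a b : K, a ≠ 0 → b ≠ 0 → a + b ≠ 0 → min (valq a) (valq b) ≤ valq (a + b))
    (hval_poly : ∀ p : Polynomial k, p ≠ 0 → valq (ι p) = -(p.natDegree : ℚ))
    (m n : ℕ) (f θ : Polynomial (Polynomial k))
    (hfm : f.natDegree = m) (hθn : θ.natDegree = n) (hθ0 : θ ≠ 0)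
    (hnz : ∀ y ∈ (θ.map ι).roots, (f.map ι).eval y ≠ 0) :
    ((resultant m n f θ).natDegree : ℚ)
        ≤ m * θ.leadingCoeff.natDegree +
          ((θ.map ι).roots.map fun y => -valq ((f.map ι).eval y)).sum ∧
      ∃ z : ℤ,
        (m * θ.leadingCoeff.natDegree : ℚ) +
            ((θ.map ι).roots.map fun y => -valq ((f.map ι).eval y)).sum = z :=
  stmt13_general ι valq hval_mul hval_poly m n f θ hfm hθn hθ0 hnz
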